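/- arXiv:2512.24590 — 10 statements merged into one kernel-verified Lean document; each statement's English description precedes it below -/
import Mathlib

section
/- Let p be an odd prime and let X ⊆ F_p^d be a finite equilateral set with common squared distance Δ ≠ 0. If p does not divide |X|, then |X| ≤ d + 1. -/
/-- Let `p` be an odd prime and `X ⊆ 𝔽_p^d` a finite equilateral set with
common squared distance `Δ ≠ 0`. If `p ∤ |X|` then `|X| ≤ d + 1`. -/
theorem stmt_2 (p : ℕ) [Fact p.Prime] (hp2 : p ≠ 2) (d : ℕ) (Δ : ZMod p) (hΔ : Δ ≠ 0)
    (X : Finset (Fin d → ZMod p))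
    (hX : ∀ x ∈ X, ∀ y ∈ X, x ≠ y → ∑ k, (x k - y k) ^ 2 = Δ)
    (hcard : ¬ p ∣ X.card) :
    X.card ≤ d + 1 := by
  by_contra hlt
  push_neg at hlt
  have hfr : Module.finrank (ZMod p) (Fin d → ZMod p) + 1 < X.card := by
    simpa using hlt
  obtain ⟨f, hsum, hzero, x₀, hx₀, hfx₀⟩ :=
    Module.exists_nontrivial_relation_sum_zero_of_finrank_succ_lt_card (R := ZMod p) hfr
  have hcomp : ∀ k, ∑ x ∈ X, f x * x k = 0 := by
    intro k
    have := congrFun hsum k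
    simpa [Finset.sum_apply] using this
  set S := ∑ x ∈ X, f x * ∑ k, x k ^ 2 with hS
  have key : ∀ z ∈ X, Δ * f z = -S := by
    intro z hz
    have h1 : ∑ x ∈ X, f x * ∑ k, (z k - x k) ^ 2 = -(Δ * f z) := by
      rw [← Finset.add_sum_erase _ _ hz]
      have he : ∑ x ∈ X.erase z, f x * ∑ k, (z k - x k) ^ 2
          = ∑ x ∈ X.erase z, f x * Δ := by
        refine Finset.sum_congr rfl fun x hx => ?_
        rw [hX z hz x (Finset.mem_erase.mp hx).2 (Ne.symm (Finset.mem_erase.mp hx).1)]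
      rw [he, ← Finset.sum_mul, Finset.sum_erase_eq_sub hz, hzero]
      simp [mul_comm]
    have h2 : ∑ x ∈ X, f x * ∑ k, (z k - x k) ^ 2 = S := by
      have expand : ∀ x : Fin d → ZMod p,
          f x * ∑ k, (z k - x k) ^ 2
            = f x * ∑ k, z k ^ 2 - ∑ k, 2 * z k * (f x * x k) + f x * ∑ k, x k ^ 2 := by
        intro x
        rw [Finset.mul_sum, Finset.mul_sum, Finset.mul_sum, ← Finset.sum_sub_distrib,
          ← Finset.sum_add_distrib]
        refine Finset.sum_congr rfl fun k _ => by ring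
      calc ∑ x ∈ X, f x * ∑ k, (z k - x k) ^ 2
          = ∑ x ∈ X, (f x * ∑ k, z k ^ 2 - ∑ k, 2 * z k * (f x * x k)
              + f x * ∑ k, x k ^ 2) := Finset.sum_congr rfl fun x _ => expand x
        _ = (∑ x ∈ X, f x) * (∑ k, z k ^ 2)
              - ∑ k, 2 * z k * (∑ x ∈ X, f x * x k) + S := by
            rw [Finset.sum_add_distrib, Finset.sum_sub_distrib, ← Finset.sum_mul,
              Finset.sum_comm]
            congr 1
            congr 1
            refine Finset.sum_congr rfl fun k _ => ?_
            rw [Finset.mul_sum]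
        _ = S := by
            rw [hzero, zero_mul]
            simp [hcomp]
    rw [h1] at h2
    linear_combination -h2
  have hsumkey : (X.card : ZMod p) * (-S) = 0 := by
    calc (X.card : ZMod p) * (-S) = ∑ z ∈ X, (-S) := by
          rw [Finset.sum_const, nsmul_eq_mul]
      _ = ∑ z ∈ X, Δ * f z := Finset.sum_congr rfl fun z hz => (key z hz).symm
      _ = Δ * ∑ z ∈ X, f z := by rw [Finset.mul_sum]
      _ = 0 := by rw [hzero, mul_zero]
  have hn : (X.card : ZMod p) ≠ 0 := by
    rwa [Ne, ZMod.natCast_eq_zero_iff]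
  have hS0 : S = 0 := by
    rcases mul_eq_zero.mp hsumkey with h | h
    · exact absurd h hn
    · exact neg_eq_zero.mp h
  have := key x₀ hx₀
  rw [hS0, neg_zero] at this
  exact hfx₀ ((mul_eq_zero.mp this).resolve_left hΔ)
end

section
/- Let p be an odd prime and let X ⊆ F_p^d be a finite equilateral set with common squared distance Δ ≠ 0. Then |X| ≤ d + 2. -/
/-!
The kernel `Δ - |x - y|²` splits as `2⟪x, y⟫ - |y|² + (Δ - |x|²)`, a sum of `d + 2` products
`f(x) g(y)`, so on any finite set of points its matrix has rank at most `d + 2`. On an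
equilateral set with squared distance `Δ` the same matrix is `Δ • 1`, of rank `|X|` when `Δ`
is not a zero divisor.
-/

open Matrix

variable {R ι : Type*} [CommRing R] [Fintype ι]

def sqDist (x y : ι → R) : R := ∑ k, (x k - y k) ^ 2

lemma sqDist_eq (x y : ι → R) : sqDist x y = x ⬝ᵥ x - 2 * (x ⬝ᵥ y) + y ⬝ᵥ y := by
  have hsq : ∀ k, (x k - y k) ^ 2 = x k * x k - 2 * (x k * y k) + y k * y k := fun k => by ring
  simp only [sqDist, hsq, Finset.sum_add_distrib, Finset.sum_sub_distrib, ← Finset.mul_sum,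
    dotProduct]

theorem rank_sub_sqDist_le [Nontrivial R] {X : Type*} [Fintype X] (Δ : R) (v : X → ι → R) :
    (of fun x y => Δ - sqDist (v x) (v y)).rank ≤ Fintype.card ι + 2 := by
  let L : Matrix X (ι ⊕ Fin 2) R := of fun x => Sum.elim (2 • v x) ![-1, Δ - v x ⬝ᵥ v x]
  let M : Matrix (ι ⊕ Fin 2) X R := of fun j y => Sum.elim (v y) ![v y ⬝ᵥ v y, 1] j
  have hLM : L * M = of fun x y => Δ - sqDist (v x) (v y) := by
    ext x y
    simp only [L, M, mul_apply, of_apply, Fintype.sum_sum_type, Sum.elim_inl, Sum.elim_inr,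
      Fin.sum_univ_two, cons_val_zero, cons_val_one, cons_val_fin_one]
    rw [← dotProduct, smul_dotProduct, sqDist_eq]
    ring
  calc _ = (L * M).rank := by rw [hLM]
    _ ≤ L.rank := rank_mul_le_left L M
    _ ≤ Fintype.card (ι ⊕ Fin 2) := rank_le_card_width L
    _ = Fintype.card ι + 2 := by simp

theorem card_le_card_add_two_of_sqDist_eq [Nontrivial R] {Δ : R} (hΔ : Δ ∈ nonZeroDivisors R)
    (X : Finset (ι → R)) (hX : ∀ x ∈ X, ∀ y ∈ X, x ≠ y → sqDist x y = Δ) :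
    X.card ≤ Fintype.card ι + 2 := by
  classical
  have hdiag : (of fun x y : X => Δ - sqDist x.1 y.1) = Δ • (1 : Matrix X X R) := by
    ext x y
    by_cases hxy : x = y
    · simp [hxy, sqDist]
    · simp [hxy, hX x x.2 y y.2 (Subtype.coe_ne_coe.mpr hxy)]
  have hrank := rank_sub_sqDist_le Δ ((↑) : X → ι → R)
  rwa [hdiag, rank_smul_of_mem_nonZeroDivisors _ hΔ, rank_one, Fintype.card_coe] at hrank

theorem stmt_3_general (p : ℕ) [Fact p.Prime] (d : ℕ) (Δ : ZMod p) (hΔ : Δ ≠ 0)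
    (X : Finset (Fin d → ZMod p))
    (hX : ∀ x ∈ X, ∀ y ∈ X, x ≠ y → ∑ k, (x k - y k) ^ 2 = Δ) :
    X.card ≤ d + 2 := by
  simpa using card_le_card_add_two_of_sqDist_eq (mem_nonZeroDivisors_of_ne_zero hΔ) X hX

/-- Let `p` be an odd prime and `X ⊆ 𝔽_p^d` a finite equilateral set with
common squared distance `Δ ≠ 0`. Then `|X| ≤ d + 2`. -/
theorem stmt_3 (p : ℕ) [Fact p.Prime] (hp2 : p ≠ 2) (d : ℕ) (Δ : ZMod p) (hΔ : Δ ≠ 0)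
    (X : Finset (Fin d → ZMod p))
    (hX : ∀ x ∈ X, ∀ y ∈ X, x ≠ y → ∑ k, (x k - y k) ^ 2 = Δ) :
    X.card ≤ d + 2 :=
  stmt_3_general p d Δ hΔ X hX
end

section
/- Let p be an odd prime and let X ⊆ F_p^d be a finite equilateral set with common squared distance Δ ≠ 0 such that |X| = d + 2. Then p divides d + 2. -/
/-- Let `p` be an odd prime and `X ⊆ 𝔽_p^d` a finite equilateral set with
common squared distance `Δ ≠ 0` of size exactly `d + 2`. Then `p ∣ d + 2`. -/
theorem stmt_4 (p : ℕ) [Fact p.Prime] (hp2 : p ≠ 2) (d : ℕ) (Δ : ZMod p) (hΔ : Δ ≠ 0)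
    (X : Finset (Fin d → ZMod p))
    (hX : ∀ x ∈ X, ∀ y ∈ X, x ≠ y → ∑ k, (x k - y k) ^ 2 = Δ)
    (hcard : X.card = d + 2) :
    p ∣ d + 2 := by
  classical
  -- enumerate X
  let e : Fin (d + 2) ≃ X := (finCongr hcard.symm).trans X.equivFin.symm
  set x : Fin (d + 2) → (Fin d → ZMod p) := fun i => (e i : Fin d → ZMod p) with hxdef
  have hxmem : ∀ i, x i ∈ X := fun i => (e i).2
  have hxinj : Function.Injective x := fun i j h => e.injective (Subtype.ext h)
  -- bilinear form
  set B : (Fin d → ZMod p) → (Fin d → ZMod p) → ZMod p :=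
    fun a b => ∑ k, a k * b k with hBdef
  have hdist : ∀ i j, i ≠ j → B (x i - x j) (x i - x j) = Δ := by
    intro i j hij
    have := hX (x i) (hxmem i) (x j) (hxmem j) (fun h => hij (hxinj h))
    simpa [B, pow_two] using this
  have expand : ∀ a b : Fin d → ZMod p,
      B (a - b) (a - b) = B a a - 2 * B a b + B b b := by
    intro a b
    simp only [B, Finset.mul_sum, ← Finset.sum_sub_distrib, ← Finset.sum_add_distrib]
    refine Finset.sum_congr rfl fun k _ => ?_
    simp only [Pi.sub_apply]; ring
  -- difference vectors
  set y : Fin (d + 1) → (Fin d → ZMod p) := fun i => x i.succ - x 0 with hydef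
  have gram_diag : ∀ i, B (y i) (y i) = Δ := fun i =>
    hdist i.succ 0 (Fin.succ_ne_zero i)
  have gram_off : ∀ i j, i ≠ j → 2 * B (y i) (y j) = Δ := by
    intro i j hij
    have h1 : y i - y j = x i.succ - x j.succ := by
      simp only [y]; abel
    have h2 : B (y i - y j) (y i - y j) = Δ := by
      rw [h1]
      exact hdist i.succ j.succ (fun h => hij (Fin.succ_injective _ h))
    have := expand (y i) (y j)
    rw [h2, gram_diag i, gram_diag j] at this
    linear_combination this
  -- linear dependence
  have hnli : ¬ LinearIndependent (ZMod p) y := by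
    intro h
    have hc := h.fintype_card_le_finrank
    simp [Module.finrank_fin_fun] at hc
  obtain ⟨c, hsum, i0, hi0⟩ := Fintype.not_linearIndependent_iff.mp hnli
  set S : ZMod p := ∑ i, c i with hSdef
  have key : ∀ j, Δ * (S + c j) = 0 := by
    intro j
    have h0 : ∑ i, c i * B (y i) (y j) = 0 := by
      have h0' : B (∑ i, c i • y i) (y j) = 0 := by rw [hsum]; simp [B]
      rw [← h0']
      simp only [B, Finset.sum_apply, Pi.smul_apply, smul_eq_mul, Finset.mul_sum,
        Finset.sum_mul]
      rw [Finset.sum_comm]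
      refine Finset.sum_congr rfl fun i _ => Finset.sum_congr rfl fun k _ => by ring
    have h2 : ∑ i, c i * (2 * B (y i) (y j)) = 0 := by
      have := congrArg (fun t => 2 * t) h0
      simpa [Finset.mul_sum, mul_left_comm, mul_comm, mul_assoc] using this
    have h3 : ∑ i, c i * (2 * B (y i) (y j))
        = ∑ i, (Δ * c i + if i = j then Δ * c i else 0) := by
      refine Finset.sum_congr rfl fun i _ => ?_
      by_cases h : i = j
      · subst h
        rw [if_pos rfl]
        have : 2 * B (y i) (y i) = 2 * Δ := by rw [gram_diag]
        rw [this]; ring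
      · rw [gram_off i j h, if_neg h]; ring
    have h4 : ∑ i, (Δ * c i + if i = j then Δ * c i else 0) = Δ * S + Δ * c j := by
      rw [Finset.sum_add_distrib, Finset.sum_ite_eq' Finset.univ j (fun i => Δ * c i),
        if_pos (Finset.mem_univ j), ← Finset.mul_sum, ← hSdef]
    rw [h3, h4] at h2
    linear_combination h2
  have hc_eq : ∀ j, c j = -S := by
    intro j
    have := key j
    rcases mul_eq_zero.mp this with h | h
    · exact absurd h hΔ
    · linear_combination h
  have hSne : S ≠ 0 := by
    intro h
    apply hi0
    rw [hc_eq i0, h, neg_zero]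
  have hfin : ((d + 2 : ℕ) : ZMod p) * S = 0 := by
    have : S = ∑ j : Fin (d + 1), c j := hSdef
    rw [Finset.sum_congr rfl (fun j _ => hc_eq j)] at this
    simp only [Finset.sum_const, Finset.card_univ, Fintype.card_fin, nsmul_eq_mul] at this
    push_cast
    push_cast at this
    linear_combination this
  have : ((d + 2 : ℕ) : ZMod p) = 0 := by
    rcases mul_eq_zero.mp hfin with h | h
    · exact h
    · exact absurd h hSne
  exact (ZMod.natCast_eq_zero_iff _ _).mp this
end

section
/- Let p be an odd prime, d ≥ 1 with p dividing d + 2, and set m = d + 1. Let 𝟙 = (1,…,1) ∈ F_p^m, let e_1, …, e_m be the standard basis of F_p^m, fix b ∈ F_p with b ≠ 0, and define P_0 = 0 and P_i = b·𝟙 + b·e_i for 1 ≤ i ≤ m. Then every P_i lies in the hyperplane W = {x ∈ F_p^m : x_1 + ⋯ + x_m = 0}, and dist²(P_i, P_j) = 2b² ≠ 0 for all 0 ≤ i < j ≤ m. In particular {P_0, …, P_m} is an equilateral set of size d + 2 contained in the d-dimensional subspace W. -/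
/-- Let `p` be an odd prime, `d ≥ 1` with `p ∣ d + 2`, `m = d + 1`,
`b ∈ 𝔽_p*`, and define `P_0 = 0`, `P_i = b·𝟙 + b·e_i` for `1 ≤ i ≤ m` in `𝔽_p^m`.
Then every `P_i` lies in the hyperplane `W = {x : ∑ x_i = 0}` and
`dist²(P_i, P_j) = 2b² ≠ 0` for all `i ≠ j`; the `P_i` are pairwise distinct, so
`{P_0, …, P_m}` is an equilateral set of size `d + 2` inside the `d`-dimensional
subspace `W`. -/
theorem stmt_5 (p : ℕ) [Fact p.Prime] (hp2 : p ≠ 2) (d : ℕ) (hd : 1 ≤ d) (hpd : p ∣ d + 2)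
    (b : ZMod p) (hb : b ≠ 0) :
    ∀ P : Fin (d + 1 + 1) → Fin (d + 1) → ZMod p,
      P = (fun i => Fin.cases (0 : Fin (d + 1) → ZMod p)
            (fun j : Fin (d + 1) => fun k : Fin (d + 1) => b + if k = j then b else 0) i) →
      (∀ i, ∑ k, P i k = 0) ∧
        (∀ i j, i ≠ j → ∑ k, (P i k - P j k) ^ 2 = 2 * b ^ 2) ∧
        2 * b ^ 2 ≠ 0 ∧
        Function.Injective P := by
  intro P hP
  subst hP
  have hdcast : ((d : ZMod p) + 2) = 0 := by
    have : ((d + 2 : ℕ) : ZMod p) = 0 := (ZMod.natCast_eq_zero_iff _ _).mpr hpd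
    push_cast at this
    linear_combination this
  have htwo : (2 : ZMod p) ≠ 0 := by
    intro h
    have h2 : (p : ℕ) ∣ 2 := by
      have : ((2 : ℕ) : ZMod p) = 0 := by exact_mod_cast h
      exact (ZMod.natCast_eq_zero_iff _ _).mp this
    exact hp2 ((Nat.prime_dvd_prime_iff_eq (Fact.out : p.Prime) Nat.prime_two).mp h2)
  have h2b : 2 * b ^ 2 ≠ 0 := mul_ne_zero htwo (pow_ne_zero _ hb)
  have key : ∀ i j : Fin (d + 1 + 1), i ≠ j →
      ∑ k, ((Fin.cases (motive := fun _ => Fin (d + 1) → ZMod p) (0 : Fin (d + 1) → ZMod p)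
          (fun j : Fin (d + 1) => fun k : Fin (d + 1) => b + if k = j then b else 0) i) k -
        (Fin.cases (motive := fun _ => Fin (d + 1) → ZMod p) (0 : Fin (d + 1) → ZMod p)
          (fun j : Fin (d + 1) => fun k : Fin (d + 1) => b + if k = j then b else 0) j) k) ^ 2
        = 2 * b ^ 2 := by
    intro i j hij
    obtain rfl | ⟨i', rfl⟩ := Fin.eq_zero_or_eq_succ i <;>
      obtain rfl | ⟨j', rfl⟩ := Fin.eq_zero_or_eq_succ j
    · exact absurd rfl hij
    · simp only [Fin.cases_zero, Fin.cases_succ, Pi.zero_apply]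
      have h : ∀ k : Fin (d + 1),
          ((0 : ZMod p) - (b + if k = j' then b else 0)) ^ 2
            = b ^ 2 + (if k = j' then 3 * b ^ 2 else 0) := by
        intro k; split_ifs <;> ring
      rw [Finset.sum_congr rfl (fun k _ => h k), Finset.sum_add_distrib,
        Finset.sum_const, Finset.sum_ite_eq' Finset.univ j' (fun _ => 3 * b ^ 2)]
      simp [Finset.card_univ, nsmul_eq_mul]
      linear_combination b ^ 2 * hdcast
    · simp only [Fin.cases_zero, Fin.cases_succ, Pi.zero_apply]
      have h : ∀ k : Fin (d + 1),
          ((b + if k = i' then b else 0) - (0 : ZMod p)) ^ 2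
            = b ^ 2 + (if k = i' then 3 * b ^ 2 else 0) := by
        intro k; split_ifs <;> ring
      rw [Finset.sum_congr rfl (fun k _ => h k), Finset.sum_add_distrib,
        Finset.sum_const, Finset.sum_ite_eq' Finset.univ i' (fun _ => 3 * b ^ 2)]
      simp [Finset.card_univ, nsmul_eq_mul]
      linear_combination b ^ 2 * hdcast
    · have hij' : i' ≠ j' := fun h => hij (by rw [h])
      simp only [Fin.cases_succ]
      have h : ∀ k : Fin (d + 1),
          ((b + if k = i' then b else 0) - (b + if k = j' then b else 0)) ^ 2
            = (if k = i' then b ^ 2 else 0) + (if k = j' then b ^ 2 else 0) := by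
        intro k
        split_ifs with h1 h2 h2
        · exact (hij' (h1 ▸ h2)).elim
        · ring
        · ring
        · ring
      rw [Finset.sum_congr rfl (fun k _ => h k), Finset.sum_add_distrib,
        Finset.sum_ite_eq' Finset.univ i' (fun _ => b ^ 2),
        Finset.sum_ite_eq' Finset.univ j' (fun _ => b ^ 2)]
      simp
      ring
  refine ⟨?_, key, h2b, ?_⟩
  · intro i
    obtain rfl | ⟨i', rfl⟩ := Fin.eq_zero_or_eq_succ i
    · simp
    · simp only [Fin.cases_succ]
      rw [Finset.sum_add_distrib, Finset.sum_const,
        Finset.sum_ite_eq' Finset.univ i' (fun _ => b)]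
      simp only [Finset.card_univ, Fintype.card_fin, nsmul_eq_mul, Finset.mem_univ, if_true]
      push_cast
      linear_combination b * hdcast
  · intro i j h
    by_contra hij
    have hk := key i j hij
    rw [show (Fin.cases (motive := fun _ => Fin (d + 1) → ZMod p) (0 : Fin (d + 1) → ZMod p)
          (fun j : Fin (d + 1) => fun k : Fin (d + 1) => b + if k = j then b else 0) i)
        = (Fin.cases (motive := fun _ => Fin (d + 1) → ZMod p) (0 : Fin (d + 1) → ZMod p)
          (fun j : Fin (d + 1) => fun k : Fin (d + 1) => b + if k = j then b else 0) j) from h] at hk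
    rcases hk with hk
    simp only [sub_self, ne_eq] at hk
    apply h2b
    rw [← hk]
    simp
end

section
/- Let p be an odd prime and let P_0, …, P_{n-1} ∈ F_p^d be an equilateral set with common squared distance Δ ≠ 0. For indices i < j define the midpoint M_{ij} = (P_i + P_j)/2. If the pairs {i,j} and {k,ℓ} are disjoint, then dist²(M_{ij}, M_{kℓ}) = Δ/2. -/
/-- Let `p` be an odd prime and `P_0, …, P_{n-1} ∈ 𝔽_p^d` equilateral with
common squared distance `Δ ≠ 0`. If the pairs `{i, j}` and `{k, l}` (with `i < j`, `k < l`)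
are disjoint, then the midpoints `M_{ij} = (P_i + P_j)/2` and `M_{kl} = (P_k + P_l)/2`
satisfy `dist²(M_{ij}, M_{kl}) = Δ/2`. -/
theorem stmt_8 (p : ℕ) [Fact p.Prime] (hp2 : p ≠ 2) (d n : ℕ) (Δ : ZMod p) (hΔ : Δ ≠ 0)
    (P : Fin n → Fin d → ZMod p) (hinj : Function.Injective P)
    (hdist : ∀ i j, i ≠ j → ∑ t, (P i t - P j t) ^ 2 = Δ) :
    ∀ i j k l : Fin n, i < j → k < l →
      i ≠ k → i ≠ l → j ≠ k → j ≠ l →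
      ∑ t, (((2 : ZMod p)⁻¹ • (P i + P j)) t - ((2 : ZMod p)⁻¹ • (P k + P l)) t) ^ 2
        = Δ / 2 := by
  intro i j k l hij hkl hik hil hjk hjl
  have hp := (Fact.out : p.Prime)
  have h2 : (2 : ZMod p) ≠ 0 := by
    intro h
    have hd : (p : ℕ) ∣ 2 := by
      have : ((2 : ℕ) : ZMod p) = 0 := by exact_mod_cast h
      exact (ZMod.natCast_eq_zero_iff 2 p).mp this
    exact hp2 ((Nat.prime_dvd_prime_iff_eq hp Nat.prime_two).mp hd)
  have key : ∑ t, (P i t + P j t - P k t - P l t) ^ 2 = 2 * Δ := by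
    have hpt : ∀ t, (P i t + P j t - P k t - P l t) ^ 2 =
        (P i t - P k t) ^ 2 + (P j t - P l t) ^ 2 + (P i t - P l t) ^ 2
          + (P j t - P k t) ^ 2 - (P i t - P j t) ^ 2 - (P k t - P l t) ^ 2 := by
      intro t; ring
    rw [Finset.sum_congr rfl (fun t _ => hpt t)]
    simp only [Finset.sum_sub_distrib, Finset.sum_add_distrib]
    rw [hdist i k hik, hdist j l hjl, hdist i l hil, hdist j k hjk,
        hdist i j hij.ne, hdist k l hkl.ne]
    ring
  have hL : ∀ t, ((2 : ZMod p)⁻¹ • (P i + P j)) t - ((2 : ZMod p)⁻¹ • (P k + P l)) t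
      = (2 : ZMod p)⁻¹ * (P i t + P j t - P k t - P l t) := by
    intro t
    simp only [Pi.smul_apply, Pi.add_apply, smul_eq_mul]
    ring
  rw [Finset.sum_congr rfl (fun t _ => by rw [hL t, mul_pow])]
  rw [← Finset.mul_sum, key]
  field_simp
end

section
/- Let p be an odd prime and let P_0, …, P_{n-1} ∈ F_p^d be an equilateral set with common squared distance Δ ≠ 0. Then the map sending an unordered pair {i,j} of distinct indices to the midpoint M_{ij} = (P_i + P_j)/2 is injective; in particular the set of midpoints has exactly n(n−1)/2 elements. -/
/-- Let `p` be an odd prime and `P_0, …, P_{n-1} ∈ 𝔽_p^d` equilateral with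
common squared distance `Δ ≠ 0`. The map sending an unordered pair `{i, j}` of distinct
indices to the midpoint `M_{ij} = (P_i + P_j)/2` is injective; in particular the set of
midpoints has exactly `n(n-1)/2` elements. -/
theorem stmt_9 (p : ℕ) [Fact p.Prime] (hp2 : p ≠ 2) (d n : ℕ) (Δ : ZMod p) (hΔ : Δ ≠ 0)
    (P : Fin n → Fin d → ZMod p) (hinj : Function.Injective P)
    (hdist : ∀ i j, i ≠ j → ∑ t, (P i t - P j t) ^ 2 = Δ) :
    (∀ i j k l : Fin n, i ≠ j → k ≠ l →
        (2 : ZMod p)⁻¹ • (P i + P j) = (2 : ZMod p)⁻¹ • (P k + P l) →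
        ({i, j} : Finset (Fin n)) = {k, l}) ∧
      {x : Fin d → ZMod p | ∃ i j : Fin n, i < j ∧ x = (2 : ZMod p)⁻¹ • (P i + P j)}.ncard
        = n * (n - 1) / 2 := by
  classical
  have hp := (Fact.out : p.Prime)
  have h2 : (2 : ZMod p) ≠ 0 := by
    intro h
    have h' : ((2 : ℕ) : ZMod p) = 0 := by exact_mod_cast h
    rw [ZMod.natCast_eq_zero_iff] at h'
    exact hp2 (((Nat.prime_dvd_prime_iff_eq hp Nat.prime_two).mp h'))
  have key : ∀ i j k l : Fin n, i ≠ j → k ≠ l →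
      (2 : ZMod p)⁻¹ • (P i + P j) = (2 : ZMod p)⁻¹ • (P k + P l) →
      ({i, j} : Finset (Fin n)) = {k, l} := by
    intro i j k l hij hkl heq
    have hsum : P i + P j = P k + P l := by
      have := congrArg (fun v => (2 : ZMod p) • v) heq
      simpa [smul_smul, mul_inv_cancel₀ h2] using this
    have hpt : ∀ t, P i t + P j t = P k t + P l t := fun t => congrFun hsum t
    by_cases hik : i = k
    · subst hik
      have hjl : j = l := hinj (funext fun t => by linear_combination hpt t)
      subst hjl; rfl
    by_cases hil : i = l
    · subst hil
      have hjk : j = k := hinj (funext fun t => by linear_combination hpt t)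
      subst hjk
      exact Finset.pair_comm i j
    exfalso
    have e1 := hdist i j hij
    have e2 := hdist l k fun h => hkl h.symm
    have e3 := hdist i k hik
    have e4 := hdist i l hil
    have hs : (∑ t, (P i t - P j t) ^ 2) + (∑ t, (P l t - P k t) ^ 2)
        = 2 * (∑ t, (P i t - P k t) ^ 2) + 2 * (∑ t, (P i t - P l t) ^ 2) := by
      rw [Finset.mul_sum, Finset.mul_sum, ← Finset.sum_add_distrib, ← Finset.sum_add_distrib]
      exact Finset.sum_congr rfl fun t _ => by
        linear_combination (P j t - 3 * P i t + P k t + P l t) * hpt t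
    rw [e1, e2, e3, e4] at hs
    have h2Δ : (2 : ZMod p) * Δ = 0 := by linear_combination -hs
    exact hΔ ((mul_eq_zero.mp h2Δ).resolve_left h2)
  refine ⟨key, ?_⟩
  set F : Finset (Fin n × Fin n) := Finset.univ.filter fun q => q.1 < q.2 with hF
  have hset : {x : Fin d → ZMod p | ∃ i j : Fin n, i < j ∧ x = (2 : ZMod p)⁻¹ • (P i + P j)}
      = ↑(F.image fun q => (2 : ZMod p)⁻¹ • (P q.1 + P q.2)) := by
    ext x
    simp only [Finset.coe_image, Set.mem_image, Finset.mem_coe, hF, Finset.mem_filter,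
      Finset.mem_univ, true_and, Set.mem_setOf_eq]
    constructor
    · rintro ⟨i, j, hlt, rfl⟩; exact ⟨(i, j), hlt, rfl⟩
    · rintro ⟨⟨i, j⟩, hlt, rfl⟩; exact ⟨i, j, hlt, rfl⟩
  rw [hset, Set.ncard_coe_finset]
  have hinjOn : Set.InjOn (fun q : Fin n × Fin n => (2 : ZMod p)⁻¹ • (P q.1 + P q.2)) ↑F := by
    rintro ⟨i, j⟩ h1 ⟨k, l⟩ h2' hfe
    simp only [hF, Finset.coe_filter, Finset.mem_univ, true_and, Set.mem_setOf_eq] at h1 h2'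
    have hpair := key i j k l h1.ne h2'.ne hfe
    have hi : i = k ∨ i = l := by
      have : i ∈ ({k, l} : Finset (Fin n)) := hpair ▸ (by simp)
      simpa using this
    have hj : j = k ∨ j = l := by
      have : j ∈ ({k, l} : Finset (Fin n)) := hpair ▸ (by simp)
      simpa using this
    rcases hi with rfl | rfl
    · rcases hj with rfl | rfl
      · exact absurd h1 (lt_irrefl _)
      · rfl
    · rcases hj with rfl | rfl
      · exact absurd (h1.trans h2') (lt_irrefl _)
      · exact absurd h1 (lt_irrefl _)
  rw [Finset.card_image_of_injOn hinjOn]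
  have hswap : F.card = ((Finset.univ : Finset (Fin n × Fin n)).filter fun q => q.2 < q.1).card := by
    apply Finset.card_bij' (fun q _ => q.swap) (fun q _ => q.swap) <;> simp [hF]
  have hd : Disjoint F ((Finset.univ : Finset (Fin n × Fin n)).filter fun q => q.2 < q.1) := by
    simp only [hF, Finset.disjoint_filter, Finset.mem_filter, Finset.mem_univ, true_and]
    intro q _ h
    exact not_lt.mpr h.le
  have hu : F ∪ ((Finset.univ : Finset (Fin n × Fin n)).filter fun q => q.2 < q.1)
      = (Finset.univ : Finset (Fin n)).offDiag := by
    ext ⟨a, b⟩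
    simp [hF, Finset.mem_offDiag, ← Finset.filter_or, lt_or_lt_iff_ne]
  have hcu := Finset.card_union_of_disjoint hd
  rw [hu, Finset.offDiag_card] at hcu
  simp only [Finset.card_univ, Fintype.card_fin] at hcu
  have hnn : n * n - n = n * (n - 1) := by
    cases n with
    | zero => rfl
    | succ m =>
      have hx : (m + 1) * (m + 1) = (m + 1) * m + (m + 1) := by ring
      simp only [Nat.succ_sub_one]
      omega
  rw [hnn] at hcu
  omega
end

section
/- Let p be an odd prime, n ≥ 4, and let P_0, …, P_{n-1} ∈ F_p^d be an equilateral set with common squared distance Δ ≠ 0. Then the set M = {(P_i + P_j)/2 : 0 ≤ i < j ≤ n−1} of all edge midpoints is a two-distance set of size n(n−1)/2: it has exactly n(n−1)/2 elements, and the set of values dist²(x, y) over distinct x, y ∈ M is exactly {Δ/4, Δ/2}, which are two distinct nonzero elements of F_p. -/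
/-!
Index the midpoints by the edges `s(i, j)` of the complete graph on the points. Expanding
squares gives the polarization identity
`|a + b - c - e|² = |a - c|² + |b - e|² + |a - e|² + |b - c|² - |a - b|² - |c - e|²`,
so for an equilateral family the squared distance of two edge midpoints is `Δ / 4` when the
edges share a vertex and `Δ / 2` when they are disjoint. Both values are nonzero when `2 ≠ 0`,
so distinct edges have distinct midpoints, and the number of midpoints is `n.choose 2`.
-/

open Finset

section CommRing

variable {R τ : Type*} [CommRing R] [Fintype τ]

def quadDist (x y : τ → R) : R := ∑ t, (x t - y t) ^ 2

lemma quadDist_self (x : τ → R) : quadDist x x = 0 := by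
  simp [quadDist]

lemma quadDist_smul (r : R) (x y : τ → R) :
    quadDist (r • x) (r • y) = r ^ 2 * quadDist x y := by
  simp only [quadDist, mul_sum, Pi.smul_apply, smul_eq_mul]
  exact sum_congr rfl fun t _ => by ring

lemma quadDist_add_add (a b c e : τ → R) :
    quadDist (a + b) (c + e) = quadDist a c + quadDist b e + quadDist a e + quadDist b c
      - quadDist a b - quadDist c e := by
  simp only [quadDist, ← sum_add_distrib, ← sum_sub_distrib]
  exact sum_congr rfl fun t _ => by simp only [Pi.add_apply]; ring

end CommRing

section Field

variable {K τ ι : Type*} [Field K]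

def edgeMidpoint (P : ι → τ → K) : Sym2 ι → τ → K :=
  Sym2.lift ⟨fun i j => (2 : K)⁻¹ • (P i + P j), fun i j => by simp only [add_comm]⟩

@[simp]
lemma edgeMidpoint_mk (P : ι → τ → K) (i j : ι) :
    edgeMidpoint P s(i, j) = (2 : K)⁻¹ • (P i + P j) :=
  rfl

lemma setOf_lt_midpoint_eq_image_edgeMidpoint [LinearOrder ι] (P : ι → τ → K) :
    {x | ∃ i j : ι, i < j ∧ x = (2 : K)⁻¹ • (P i + P j)} = edgeMidpoint P '' Sym2.diagSetᶜ := by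
  ext x
  constructor
  · rintro ⟨i, j, hij, rfl⟩
    exact ⟨s(i, j), by simpa using hij.ne, rfl⟩
  · rintro ⟨z, hz, rfl⟩
    induction z using Sym2.ind with | h i j => ?_
    rcases lt_or_gt_of_ne (show i ≠ j by simpa using hz) with h | h
    · exact ⟨i, j, h, rfl⟩
    · exact ⟨j, i, h, by rw [edgeMidpoint_mk, add_comm]⟩

lemma four_ne_zero_of_two_ne_zero (h2 : (2 : K) ≠ 0) : (4 : K) ≠ 0 := by
  simpa [show (4 : K) = 2 ^ 2 by norm_num] using pow_ne_zero 2 h2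

variable [Fintype τ]

def IsEquilateral (P : ι → τ → K) (Δ : K) : Prop :=
  ∀ i j, i ≠ j → quadDist (P i) (P j) = Δ

variable {P : ι → τ → K} {Δ : K}

lemma quadDist_edgeMidpoint_of_adjacent (h2 : (2 : K) ≠ 0) (hP : IsEquilateral P Δ)
    {a b e : ι} (hab : a ≠ b) (hae : a ≠ e) (hbe : b ≠ e) :
    quadDist (edgeMidpoint P s(a, b)) (edgeMidpoint P s(a, e)) = Δ / 4 := by
  rw [edgeMidpoint_mk, edgeMidpoint_mk, quadDist_smul, quadDist_add_add, quadDist_self,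
    hP b e hbe, hP a e hae, hP b a hab.symm, hP a b hab]
  field_simp [four_ne_zero_of_two_ne_zero h2]
  ring

lemma quadDist_edgeMidpoint_of_disjoint (h2 : (2 : K) ≠ 0) (hP : IsEquilateral P Δ)
    {a b c e : ι} (hab : a ≠ b) (hac : a ≠ c) (hae : a ≠ e) (hbc : b ≠ c) (hbe : b ≠ e)
    (hce : c ≠ e) :
    quadDist (edgeMidpoint P s(a, b)) (edgeMidpoint P s(c, e)) = Δ / 2 := by
  rw [edgeMidpoint_mk, edgeMidpoint_mk, quadDist_smul, quadDist_add_add, hP a c hac,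
    hP b e hbe, hP a e hae, hP b c hbc, hP a b hab, hP c e hce]
  field_simp
  ring

lemma quadDist_edgeMidpoint_mem (h2 : (2 : K) ≠ 0) (hP : IsEquilateral P Δ)
    {z w : Sym2 ι} (hz : ¬z.IsDiag) (hw : ¬w.IsDiag) (hzw : z ≠ w) :
    quadDist (edgeMidpoint P z) (edgeMidpoint P w) ∈ ({Δ / 4, Δ / 2} : Set K) := by
  induction z using Sym2.ind with | h a b => ?_
  induction w using Sym2.ind with | h c e => ?_
  rw [Sym2.mk_isDiag_iff] at hz hw
  by_cases hac : a = c
  · subst hac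
    exact .inl (quadDist_edgeMidpoint_of_adjacent h2 hP hz hw fun h => hzw (by rw [h]))
  by_cases hae : a = e
  · subst hae
    rw [Sym2.eq_swap (a := c)]
    exact .inl (quadDist_edgeMidpoint_of_adjacent h2 hP hz (Ne.symm hw)
      fun h => hzw (by rw [h, Sym2.eq_swap]))
  by_cases hbc : b = c
  · subst hbc
    rw [Sym2.eq_swap]
    exact .inl (quadDist_edgeMidpoint_of_adjacent h2 hP (Ne.symm hz) hw hae)
  by_cases hbe : b = e
  · subst hbe
    rw [Sym2.eq_swap, Sym2.eq_swap (a := c)]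
    exact .inl (quadDist_edgeMidpoint_of_adjacent h2 hP (Ne.symm hz) (Ne.symm hw) hac)
  exact .inr (quadDist_edgeMidpoint_of_disjoint h2 hP hz hac hae hbc hbe hw)

lemma div_four_ne_zero (h2 : (2 : K) ≠ 0) (hΔ : Δ ≠ 0) : Δ / 4 ≠ 0 :=
  div_ne_zero hΔ (four_ne_zero_of_two_ne_zero h2)

lemma div_four_ne_div_two (h2 : (2 : K) ≠ 0) (hΔ : Δ ≠ 0) : Δ / 4 ≠ Δ / 2 := by
  rw [Ne, div_eq_div_iff (four_ne_zero_of_two_ne_zero h2) h2]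
  intro h
  exact mul_ne_zero hΔ h2 (by linear_combination -h)

lemma edgeMidpoint_injOn (h2 : (2 : K) ≠ 0) (hP : IsEquilateral P Δ) (hΔ : Δ ≠ 0) :
    Set.InjOn (edgeMidpoint P) Sym2.diagSetᶜ := by
  intro z hz w hw hzw
  by_contra hne
  have hmem := quadDist_edgeMidpoint_mem h2 hP hz hw hne
  rw [hzw, quadDist_self] at hmem
  rcases hmem with h | h
  · exact div_four_ne_zero h2 hΔ h.symm
  · exact div_ne_zero hΔ h2 h.symm

lemma ncard_image_edgeMidpoint (h2 : (2 : K) ≠ 0) (hP : IsEquilateral P Δ) (hΔ : Δ ≠ 0) :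
    (edgeMidpoint P '' Sym2.diagSetᶜ).ncard = (Nat.card ι).choose 2 := by
  rw [(edgeMidpoint_injOn h2 hP hΔ).ncard_image, Sym2.ncard_diagSet_compl]

lemma quadDist_values_edgeMidpoint (h2 : (2 : K) ≠ 0) (hP : IsEquilateral P Δ) (hΔ : Δ ≠ 0)
    (f : Fin 4 ↪ ι) :
    {v | ∃ x ∈ edgeMidpoint P '' Sym2.diagSetᶜ, ∃ y ∈ edgeMidpoint P '' Sym2.diagSetᶜ,
      x ≠ y ∧ v = quadDist x y} = {Δ / 4, Δ / 2} := by
  have attained {z w : Sym2 ι} (hz : ¬z.IsDiag) (hw : ¬w.IsDiag) (hzw : z ≠ w) :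
      quadDist (edgeMidpoint P z) (edgeMidpoint P w) ∈
        {v | ∃ x ∈ edgeMidpoint P '' Sym2.diagSetᶜ, ∃ y ∈ edgeMidpoint P '' Sym2.diagSetᶜ,
          x ≠ y ∧ v = quadDist x y} :=
    ⟨_, ⟨z, hz, rfl⟩, _, ⟨w, hw, rfl⟩, fun h => hzw (edgeMidpoint_injOn h2 hP hΔ hz hw h), rfl⟩
  ext v
  constructor
  · rintro ⟨_, ⟨z, hz, rfl⟩, _, ⟨w, hw, rfl⟩, hzw, rfl⟩
    exact quadDist_edgeMidpoint_mem h2 hP hz hw fun h => hzw (h ▸ rfl)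
  · rintro (rfl | rfl)
    · rw [← quadDist_edgeMidpoint_of_adjacent h2 hP (a := f 0) (b := f 1) (e := f 2)
        (by simp) (by simp) (by simp)]
      exact attained (by simp) (by simp) (by simp)
    · rw [← quadDist_edgeMidpoint_of_disjoint h2 hP (a := f 0) (b := f 1) (c := f 2) (e := f 3)
        (by simp) (by simp) (by simp) (by simp) (by simp) (by simp)]
      exact attained (by simp) (by simp) (by simp)

end Field

theorem stmt_10_general (p : ℕ) [Fact p.Prime] (hp2 : p ≠ 2) (d n : ℕ) (hn : 4 ≤ n)
    (Δ : ZMod p) (hΔ : Δ ≠ 0)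
    (P : Fin n → Fin d → ZMod p)
    (hdist : ∀ i j, i ≠ j → ∑ t, (P i t - P j t) ^ 2 = Δ) :
    ∀ M : Set (Fin d → ZMod p),
      M = {x | ∃ i j : Fin n, i < j ∧ x = (2 : ZMod p)⁻¹ • (P i + P j)} →
      M.ncard = n * (n - 1) / 2 ∧
        {v : ZMod p | ∃ x ∈ M, ∃ y ∈ M, x ≠ y ∧ v = ∑ t, (x t - y t) ^ 2}
          = {Δ / 4, Δ / 2} ∧
        Δ / 4 ≠ Δ / 2 ∧ Δ / 4 ≠ 0 ∧ Δ / 2 ≠ 0 := by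
  rintro M rfl
  have h2 : (2 : ZMod p) ≠ 0 := Ring.two_ne_zero (by rwa [ZMod.ringChar_zmod_n])
  have hP : IsEquilateral P Δ := hdist
  rw [setOf_lt_midpoint_eq_image_edgeMidpoint]
  refine ⟨?_, quadDist_values_edgeMidpoint h2 hP hΔ (Fin.castLEEmb hn),
    div_four_ne_div_two h2 hΔ, div_four_ne_zero h2 hΔ, div_ne_zero hΔ h2⟩
  rw [ncard_image_edgeMidpoint h2 hP hΔ, Nat.card_fin, Nat.choose_two_right]

/-- Let `p` be an odd prime, `n ≥ 4`, and `P_0, …, P_{n-1} ∈ 𝔽_p^d`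
equilateral with common squared distance `Δ ≠ 0`. Then the set `M` of all edge midpoints
`(P_i + P_j)/2` (for `i < j`) is a two-distance set of size `n(n-1)/2`: it has exactly
`n(n-1)/2` elements, and the set of values `dist²(x, y)` over distinct `x, y ∈ M` is
exactly `{Δ/4, Δ/2}`, two distinct nonzero elements of `𝔽_p`. -/
theorem stmt_10 (p : ℕ) [Fact p.Prime] (hp2 : p ≠ 2) (d n : ℕ) (hn : 4 ≤ n)
    (Δ : ZMod p) (hΔ : Δ ≠ 0)
    (P : Fin n → Fin d → ZMod p) (hinj : Function.Injective P)
    (hdist : ∀ i j, i ≠ j → ∑ t, (P i t - P j t) ^ 2 = Δ) :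
    ∀ M : Set (Fin d → ZMod p),
      M = {x | ∃ i j : Fin n, i < j ∧ x = (2 : ZMod p)⁻¹ • (P i + P j)} →
      M.ncard = n * (n - 1) / 2 ∧
        {v : ZMod p | ∃ x ∈ M, ∃ y ∈ M, x ≠ y ∧ v = ∑ t, (x t - y t) ^ 2}
          = {Δ / 4, Δ / 2} ∧
        Δ / 4 ≠ Δ / 2 ∧ Δ / 4 ≠ 0 ∧ Δ / 2 ≠ 0 :=
  stmt_10_general p hp2 d n hn Δ hΔ P hdist
end

section
/- Let p be an odd prime and d ≥ 2 with p dividing d + 2. Let W = {x ∈ F_p^{d+1} : x_1 + ⋯ + x_{d+1} = 0}, a d-dimensional subspace of F_p^{d+1}. Then there exists a set X ⊆ W with |X| = (d+2)(d+1)/2 = C(d+2, 2) which is a two-distance set with respect to the distance dist²(x,y) = Σ_{i=1}^{d+1} (x_i − y_i)². -/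
open Finset

private def fv (p d : ℕ) (a : Fin (d+2)) : Fin (d+1) → ZMod p :=
  fun x => (if (x:ℕ) = (a:ℕ) then 1 else 0) - (if (a:ℕ) = d+1 then 1 else 0)

private lemma sum_ind (p d m : ℕ) :
    ∑ x : Fin (d+1), (if (x:ℕ) = m then (1:ZMod p) else 0)
      = if m < d+1 then 1 else 0 := by
  by_cases h : m < d + 1
  · rw [if_pos h]
    rw [show (fun x : Fin (d+1) => if (x:ℕ) = m then (1:ZMod p) else 0)
        = fun x => if x = ⟨m, h⟩ then 1 else 0 by funext x; simp [Fin.ext_iff]]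
    simp
  · rw [if_neg h]
    apply Finset.sum_eq_zero
    intro x _
    rw [if_neg]
    have := x.isLt
    omega

private lemma dcast (p d : ℕ) (hpd : p ∣ d + 2) : ((d:ZMod p) + 1) = -1 := by
  have : ((d+2 : ℕ) : ZMod p) = 0 := (ZMod.natCast_eq_zero_iff _ _).mpr hpd
  push_cast at this
  linear_combination this

private lemma sum_fv (p d : ℕ) (hpd : p ∣ d + 2) (a : Fin (d+2)) :
    ∑ x : Fin (d+1), fv p d a x = 1 := by
  unfold fv
  rw [Finset.sum_sub_distrib, sum_ind]
  by_cases ha : (a:ℕ) = d + 1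
  · rw [if_neg (by omega), if_pos ha, Finset.sum_const, Finset.card_univ, Fintype.card_fin,
      nsmul_eq_mul, mul_one]
    push_cast
    linear_combination - dcast p d hpd
  · have : (a:ℕ) < d + 1 := by have := a.isLt; omega
    rw [if_pos this, if_neg ha]
    simp

private lemma gram (p d : ℕ) (hpd : p ∣ d + 2) (a b : Fin (d+2)) :
    ∑ x : Fin (d+1), fv p d a x * fv p d b x
      = (if a = b then 1 else 0) - (if (a:ℕ) = d+1 then 1 else 0)
        - (if (b:ℕ) = d+1 then 1 else 0) := by
  by_cases ha : (a:ℕ) = d+1 <;> by_cases hb : (b:ℕ) = d+1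
  · have hab : a = b := Fin.ext (by omega)
    have h1 : ∀ x : Fin (d+1), fv p d a x * fv p d b x = 1 := by
      intro x
      have hx := x.isLt
      simp only [fv, ha, hb, if_neg (show ¬ (x:ℕ) = d+1 by omega)]
      ring_nf
      simp
    rw [Finset.sum_congr rfl fun x _ => h1 x, Finset.sum_const, Finset.card_univ,
      Fintype.card_fin, nsmul_eq_mul, mul_one, if_pos hab, if_pos ha, if_pos hb]
    push_cast
    linear_combination dcast p d hpd
  · have hab : ¬ a = b := fun h => hb (h ▸ ha)
    have h1 : ∀ x : Fin (d+1), fv p d a x * fv p d b x = -(fv p d b x) := by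
      intro x
      have hx := x.isLt
      simp only [fv, ha, if_neg hb, if_neg (show ¬ (x:ℕ) = d+1 by omega)]
      ring_nf
      simp
    rw [Finset.sum_congr rfl fun x _ => h1 x, Finset.sum_neg_distrib, sum_fv p d hpd,
      if_neg hab, if_pos ha, if_neg hb]
    ring
  · have hab : ¬ a = b := fun h => ha (h ▸ hb)
    have h1 : ∀ x : Fin (d+1), fv p d a x * fv p d b x = -(fv p d a x) := by
      intro x
      have hx := x.isLt
      simp only [fv, hb, if_neg ha, if_neg (show ¬ (x:ℕ) = d+1 by omega)]
      ring_nf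
      simp
    rw [Finset.sum_congr rfl fun x _ => h1 x, Finset.sum_neg_distrib, sum_fv p d hpd,
      if_neg hab, if_neg ha, if_pos hb]
    ring
  · rw [if_neg ha, if_neg hb]
    by_cases hab : a = b
    · subst hab
      rw [if_pos rfl]
      have h1 : ∀ x : Fin (d+1), fv p d a x * fv p d a x
          = (if (x:ℕ) = (a:ℕ) then 1 else 0) := by
        intro x
        simp only [fv, if_neg ha, sub_zero]
        by_cases h : (x:ℕ) = (a:ℕ) <;> simp [h]
      rw [Finset.sum_congr rfl fun x _ => h1 x, sum_ind,
        if_pos (show (a:ℕ) < d+1 by have := a.isLt; omega)]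
      ring
    · rw [if_neg hab]
      have h1 : ∀ x : Fin (d+1), fv p d a x * fv p d b x = 0 := by
        intro x
        simp only [fv, if_neg ha, if_neg hb, sub_zero]
        by_cases h : (x:ℕ) = (a:ℕ)
        · rw [if_neg (show ¬ (x:ℕ) = (b:ℕ) by
            intro h'; exact hab (Fin.ext (by omega))), mul_zero]
        · rw [if_neg h, zero_mul]
      rw [Finset.sum_congr rfl fun x _ => h1 x, Finset.sum_const_zero]
      ring

private lemma distf (p d : ℕ) (hpd : p ∣ d + 2) (i j k l : Fin (d+2)) :
    ∑ x : Fin (d+1), (fv p d i x + fv p d j x - fv p d k x - fv p d l x)^2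
      = 4 + 2*(if i = j then (1:ZMod p) else 0) + 2*(if k = l then 1 else 0)
        - 2*((if i = k then 1 else 0) + (if i = l then 1 else 0)
            + (if j = k then 1 else 0) + (if j = l then 1 else 0)) := by
  have key : ∀ x : Fin (d+1),
      (fv p d i x + fv p d j x - fv p d k x - fv p d l x)^2
        = fv p d i x * fv p d i x + fv p d j x * fv p d j x
          + fv p d k x * fv p d k x + fv p d l x * fv p d l x
          + 2*(fv p d i x * fv p d j x) + 2*(fv p d k x * fv p d l x)
          - 2*(fv p d i x * fv p d k x) - 2*(fv p d i x * fv p d l x)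
          - 2*(fv p d j x * fv p d k x) - 2*(fv p d j x * fv p d l x) := by
    intro x; ring
  rw [Finset.sum_congr rfl fun x _ => key x]
  simp only [Finset.sum_sub_distrib, Finset.sum_add_distrib, ← Finset.mul_sum]
  rw [gram p d hpd i i, gram p d hpd j j, gram p d hpd k k, gram p d hpd l l,
    gram p d hpd i j, gram p d hpd k l, gram p d hpd i k, gram p d hpd i l,
    gram p d hpd j k, gram p d hpd j l]
  ring_nf
  simp

private def cvec (p d : ℕ) : Fin (d+1) → ZMod p := fun m => if (m:ℕ) = 0 then 2 else 0

private def phi (p d : ℕ) (s : Finset (Fin (d+2))) : Fin (d+1) → ZMod p :=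
  fun m => (∑ a ∈ s, fv p d a m) - cvec p d m

private lemma sum_cvec (p d : ℕ) : ∑ m : Fin (d+1), cvec p d m = 2 := by
  have h : ∀ m : Fin (d+1), cvec p d m = 2 * (if (m:ℕ) = 0 then 1 else 0) := by
    intro m
    unfold cvec
    split <;> ring
  rw [Finset.sum_congr rfl fun m _ => h m, ← Finset.mul_sum, sum_ind,
    if_pos (by omega : 0 < d + 1), mul_one]

private lemma phi_pair (p d : ℕ) {i j : Fin (d+2)} (hij : i ≠ j) (m : Fin (d+1)) :
    phi p d {i,j} m = fv p d i m + fv p d j m - cvec p d m := by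
  unfold phi
  rw [Finset.sum_pair hij]

private lemma sum_phi (p d : ℕ) (hpd : p ∣ d + 2) {i j : Fin (d+2)} (hij : i ≠ j) :
    ∑ m : Fin (d+1), phi p d {i,j} m = 0 := by
  rw [Finset.sum_congr rfl fun m _ => phi_pair p d hij m, Finset.sum_sub_distrib,
    Finset.sum_add_distrib, sum_fv p d hpd, sum_fv p d hpd, sum_cvec]
  ring

private lemma distphi (p d : ℕ) (hpd : p ∣ d + 2) {i j k l : Fin (d+2)}
    (hij : i ≠ j) (hkl : k ≠ l) :
    ∑ m : Fin (d+1), (phi p d {i,j} m - phi p d {k,l} m)^2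
      = 4 - 2*((if i = k then (1:ZMod p) else 0) + (if i = l then 1 else 0)
          + (if j = k then 1 else 0) + (if j = l then 1 else 0)) := by
  have e : ∀ m : Fin (d+1), (phi p d {i,j} m - phi p d {k,l} m)^2
      = (fv p d i m + fv p d j m - fv p d k m - fv p d l m)^2 := by
    intro m
    rw [phi_pair p d hij m, phi_pair p d hkl m]
    ring
  rw [Finset.sum_congr rfl fun m _ => e m, distf p d hpd i j k l, if_neg hij, if_neg hkl]
  ring

private lemma distphi_val (p d : ℕ) (hpd : p ∣ d + 2) {i j k l : Fin (d+2)}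
    (hij : i ≠ j) (hkl : k ≠ l) (h1 : ¬(i = k ∧ j = l)) (h2 : ¬(i = l ∧ j = k)) :
    ∑ m : Fin (d+1), (phi p d {i,j} m - phi p d {k,l} m)^2 = 2 ∨
    ∑ m : Fin (d+1), (phi p d {i,j} m - phi p d {k,l} m)^2 = 4 := by
  rw [distphi p d hpd hij hkl]
  by_cases hik : i = k <;> by_cases hil : i = l <;> by_cases hjk : j = k <;>
      by_cases hjl : j = l <;> simp_all <;>
    first
      | (left; norm_num)
      | (right; norm_num)

/-- Let `p` be an odd prime and `d ≥ 2` with `p ∣ d + 2`. Then inside the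
hyperplane `W = {x ∈ 𝔽_p^{d+1} : x_1 + ⋯ + x_{d+1} = 0}` there exists a two-distance set
`X` (with respect to `dist²(x, y) = ∑ (x_i - y_i)²`) of size `(d+2)(d+1)/2 = C(d+2, 2)`. -/
theorem stmt_11 (p : ℕ) [Fact p.Prime] (hp2 : p ≠ 2) (d : ℕ) (hd : 2 ≤ d) (hpd : p ∣ d + 2) :
    ∃ X : Finset (Fin (d + 1) → ZMod p),
      (∀ x ∈ X, ∑ i, x i = 0) ∧
      X.card = (d + 2) * (d + 1) / 2 ∧
      {v : ZMod p | ∃ x ∈ X, ∃ y ∈ X, x ≠ y ∧ v = ∑ i, (x i - y i) ^ 2}.ncard = 2 := by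
  classical
  have hp : p.Prime := Fact.out
  have h2 : (2 : ZMod p) ≠ 0 := by
    intro h
    have hdvd : p ∣ 2 := (ZMod.natCast_eq_zero_iff 2 p).mp (by exact_mod_cast h)
    exact hp2 ((Nat.prime_dvd_prime_iff_eq hp Nat.prime_two).mp hdvd)
  have h4 : (4 : ZMod p) ≠ 0 := by
    intro h
    have hdvd : p ∣ 4 := (ZMod.natCast_eq_zero_iff 4 p).mp (by exact_mod_cast h)
    have h22 : p ∣ 2 ^ 2 := by norm_num; exact hdvd
    have : p ∣ 2 := hp.dvd_of_dvd_pow h22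
    exact hp2 ((Nat.prime_dvd_prime_iff_eq hp Nat.prime_two).mp this)
  have h24 : (2 : ZMod p) ≠ 4 := by
    intro h
    apply h2
    linear_combination -h
  refine ⟨(Finset.univ.powersetCard 2).image (phi p d), ?_, ?_, ?_⟩
  · -- sum zero
    intro x hx
    obtain ⟨s, hs, rfl⟩ := Finset.mem_image.mp hx
    obtain ⟨i, j, hij, rfl⟩ := Finset.card_eq_two.mp (Finset.mem_powersetCard_univ.mp hs)
    exact sum_phi p d hpd hij
  · -- cardinality
    have hinj : Set.InjOn (phi p d) ↑(Finset.univ.powersetCard 2 :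
        Finset (Finset (Fin (d+2)))) := by
      intro s hs t ht heq
      by_contra hne
      simp only [Finset.mem_coe] at hs ht
      obtain ⟨i, j, hij, rfl⟩ := Finset.card_eq_two.mp (Finset.mem_powersetCard_univ.mp hs)
      obtain ⟨k, l, hkl, rfl⟩ := Finset.card_eq_two.mp (Finset.mem_powersetCard_univ.mp ht)
      have hz : ∑ m : Fin (d+1), (phi p d {i,j} m - phi p d {k,l} m)^2 = 0 := by
        simp [heq]
      have hne1 : ¬(i = k ∧ j = l) := fun ⟨e1, e2⟩ => hne (by rw [e1, e2])
      have hne2 : ¬(i = l ∧ j = k) := fun ⟨e1, e2⟩ => hne (by rw [e1, e2, Finset.pair_comm])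
      rcases distphi_val p d hpd hij hkl hne1 hne2 with hv | hv
      · rw [hz] at hv; exact h2 hv.symm
      · rw [hz] at hv; exact h4 hv.symm
    rw [Finset.card_image_of_injOn hinj, Finset.card_powersetCard, Finset.card_univ,
      Fintype.card_fin, Nat.choose_two_right]
    simp
  · -- distance set
    have hmem : ∀ i j : Fin (d+2), i ≠ j →
        phi p d {i,j} ∈ (Finset.univ.powersetCard 2).image (phi p d) :=
      fun i j hij => Finset.mem_image_of_mem _
        (Finset.mem_powersetCard_univ.mpr (Finset.card_pair hij))
    have hset : {v : ZMod p | ∃ x ∈ (Finset.univ.powersetCard 2).image (phi p d),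
        ∃ y ∈ (Finset.univ.powersetCard 2).image (phi p d),
        x ≠ y ∧ v = ∑ i, (x i - y i) ^ 2} = {2, 4} := by
      ext v
      simp only [Set.mem_setOf_eq, Set.mem_insert_iff, Set.mem_singleton_iff]
      constructor
      · rintro ⟨x, hx, y, hy, hxy, rfl⟩
        obtain ⟨s, hs, rfl⟩ := Finset.mem_image.mp hx
        obtain ⟨i, j, hij, rfl⟩ := Finset.card_eq_two.mp (Finset.mem_powersetCard_univ.mp hs)
        obtain ⟨t, ht, rfl⟩ := Finset.mem_image.mp hy
        obtain ⟨k, l, hkl, rfl⟩ := Finset.card_eq_two.mp (Finset.mem_powersetCard_univ.mp ht)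
        have hne1 : ¬(i = k ∧ j = l) := fun ⟨e1, e2⟩ => hxy (by rw [e1, e2])
        have hne2 : ¬(i = l ∧ j = k) := fun ⟨e1, e2⟩ => hxy (by rw [e1, e2, Finset.pair_comm])
        exact distphi_val p d hpd hij hkl hne1 hne2
      · obtain ⟨a0, ha0⟩ : ∃ a : Fin (d+2), (a:ℕ) = 0 := ⟨⟨0, by omega⟩, rfl⟩
        obtain ⟨a1, ha1⟩ : ∃ a : Fin (d+2), (a:ℕ) = 1 := ⟨⟨1, by omega⟩, rfl⟩
        obtain ⟨a2, ha2⟩ : ∃ a : Fin (d+2), (a:ℕ) = 2 := ⟨⟨2, by omega⟩, rfl⟩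
        obtain ⟨a3, ha3⟩ : ∃ a : Fin (d+2), (a:ℕ) = 3 := ⟨⟨3, by omega⟩, rfl⟩
        have h01 : a0 ≠ a1 := fun h => by rw [h] at ha0; omega
        have h02 : a0 ≠ a2 := fun h => by rw [h] at ha0; omega
        have h03 : a0 ≠ a3 := fun h => by rw [h] at ha0; omega
        have h12 : a1 ≠ a2 := fun h => by rw [h] at ha1; omega
        have h13 : a1 ≠ a3 := fun h => by rw [h] at ha1; omega
        have h23 : a2 ≠ a3 := fun h => by rw [h] at ha2; omega
        rintro (rfl | rfl)
        · have hval : ∑ m : Fin (d+1),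
              (phi p d {a0, a1} m - phi p d {a0, a2} m)^2 = 2 := by
            rw [distphi p d hpd h01 h02, if_pos rfl, if_neg h02, if_neg (fun h => h01 h.symm),
              if_neg h12]
            norm_num
          refine ⟨_, hmem a0 a1 h01, _, hmem a0 a2 h02, ?_, hval.symm⟩
          intro heq
          exact h2 (by rw [← hval]; simp [heq])
        · have hval : ∑ m : Fin (d+1),
              (phi p d {a0, a1} m - phi p d {a2, a3} m)^2 = 4 := by
            rw [distphi p d hpd h01 h23, if_neg h02, if_neg h03, if_neg h12, if_neg h13]
            norm_num
          refine ⟨_, hmem a0 a1 h01, _, hmem a2 a3 h23, ?_, hval.symm⟩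
          intro heq
          exact h4 (by rw [← hval]; simp [heq])
    rw [hset]
    exact Set.ncard_pair h24
end

section
/- Let q be an odd prime power with characteristic p, and let d ≥ 1 with p dividing d + 2. Set m = d + 1 and work in F_q^m with dist²(x,y) = Σ_{i=1}^m (x_i − y_i)². Fix b ∈ F_q with b ≠ 0, let 𝟙 = (1,…,1), e_1, …, e_m the standard basis, and define P_0 = 0 and P_i = b·𝟙 + b·e_i for 1 ≤ i ≤ m. Then all P_i lie in the d-dimensional subspace W = {x ∈ F_q^m : x_1 + ⋯ + x_m = 0} and dist²(P_i, P_j) = 2b² ≠ 0 for all i ≠ j; in particular F_q^m contains an equilateral set of size d + 2 with nonzero common squared distance inside a d-dimensional subspace. -/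
/-- Let `F = 𝔽_q` be a finite field of odd order `q` and characteristic
`p`, and let `d ≥ 1` with `p ∣ d + 2`. With `m = d + 1`, fix `b ∈ F`, `b ≠ 0`, and define
`P_0 = 0`, `P_i = b·𝟙 + b·e_i` (`1 ≤ i ≤ m`) in `F^m`. Then all `P_i` lie in the
`d`-dimensional subspace `W = {x : ∑ x_i = 0}` and `dist²(P_i, P_j) = 2b² ≠ 0` for
`i ≠ j`; the `P_i` are pairwise distinct, so `F^m` contains an equilateral set of size
`d + 2` with nonzero common squared distance inside a `d`-dimensional subspace. -/
theorem stmt_14 (F : Type*) [Field F] [Fintype F] (hq : Odd (Fintype.card F))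
    (p : ℕ) [CharP F p] (d : ℕ) (hd : 1 ≤ d) (hpd : p ∣ d + 2)
    (b : F) (hb : b ≠ 0) :
    ∀ P : Fin (d + 1 + 1) → Fin (d + 1) → F,
      P = (fun i => Fin.cases (0 : Fin (d + 1) → F)
            (fun j : Fin (d + 1) => fun k : Fin (d + 1) => b + if k = j then b else 0) i) →
      (∀ i, ∑ k, P i k = 0) ∧
        (∀ i j, i ≠ j → ∑ k, (P i k - P j k) ^ 2 = 2 * b ^ 2) ∧
        2 * b ^ 2 ≠ 0 ∧
        Function.Injective P := by
  -- characteristic facts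
  obtain ⟨n, hp, hcard⟩ := FiniteField.card F p
  have h2 : (2 : F) ≠ 0 := by
    intro h
    have hp2 : p ∣ 2 := (CharP.cast_eq_zero_iff F p 2).mp (by exact_mod_cast h)
    have : p = 2 := (Nat.prime_dvd_prime_iff_eq hp Nat.prime_two).mp hp2
    rw [hcard, this] at hq
    exact (Nat.not_odd_iff_even.mpr (Nat.even_pow.mpr ⟨even_two, n.pos.ne'⟩)) hq
  have hD : ((d : F) + 2) = 0 := by
    have := (CharP.cast_eq_zero_iff F p (d + 2)).mpr hpd
    push_cast at this
    exact this
  intro P hP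
  subst hP
  have hsum1 : ∀ j : Fin (d + 1), ∑ k, (b + if k = j then b else 0) = 0 := by
    intro j
    rw [Finset.sum_add_distrib, Finset.sum_const, Finset.sum_ite_eq' Finset.univ j fun _ => b]
    simp [Finset.card_univ, nsmul_eq_mul]
    push_cast
    calc ((d : F) + 1) * b + b = ((d : F) + 2) * b := by ring
      _ = 0 := by rw [hD, zero_mul]
  refine ⟨?_, ?_, ?_, ?_⟩
  · intro i
    induction i using Fin.cases with
    | zero => simp
    | succ j => simpa using hsum1 j
  · have key0 : ∀ j : Fin (d + 1), ∑ k, (b + if k = j then b else 0) ^ 2 = 2 * b ^ 2 := by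
      intro j
      have : ∀ k : Fin (d + 1), (b + if k = j then b else 0) ^ 2
          = b ^ 2 + if k = j then 3 * b ^ 2 else 0 := by
        intro k; split_ifs <;> ring
      rw [Finset.sum_congr rfl fun k _ => this k, Finset.sum_add_distrib,
        Finset.sum_const, Finset.sum_ite_eq' Finset.univ j fun _ => 3 * b ^ 2]
      simp [Finset.card_univ, nsmul_eq_mul]
      push_cast
      calc ((d : F) + 1) * b ^ 2 + 3 * b ^ 2 = ((d : F) + 2) * b ^ 2 + 2 * b ^ 2 := by ring
        _ = 2 * b ^ 2 := by rw [hD]; ring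
    intro i j hij
    induction i using Fin.cases with
    | zero =>
      induction j using Fin.cases with
      | zero => exact absurd rfl hij
      | succ j' =>
        simp only [Fin.cases_zero, Fin.cases_succ, Pi.zero_apply]
        have : ∀ k : Fin (d + 1), ((0:F) - (b + if k = j' then b else 0)) ^ 2
            = (b + if k = j' then b else 0) ^ 2 := by intro k; ring
        rw [Finset.sum_congr rfl fun k _ => this k]
        exact key0 j'
    | succ i' =>
      induction j using Fin.cases with
      | zero =>
        simp only [Fin.cases_zero, Fin.cases_succ, Pi.zero_apply]
        have : ∀ k : Fin (d + 1), ((b + if k = i' then b else 0) - (0:F)) ^ 2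
            = (b + if k = i' then b else 0) ^ 2 := by intro k; ring
        rw [Finset.sum_congr rfl fun k _ => this k]
        exact key0 i'
      | succ j' =>
        have hij' : i' ≠ j' := fun h => hij (by rw [h])
        simp only [Fin.cases_succ]
        have : ∀ k : Fin (d + 1),
            ((b + if k = i' then b else 0) - (b + if k = j' then b else 0)) ^ 2
            = (if k = i' then b ^ 2 else 0) + (if k = j' then b ^ 2 else 0) := by
          intro k
          rcases eq_or_ne k i' with h1 | h1 <;> rcases eq_or_ne k j' with h2 | h2
          · exact absurd (h1 ▸ h2) hij'
          all_goals simp [h1, h2, hij', hij'.symm] <;> ring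
        rw [Finset.sum_congr rfl fun k _ => this k, Finset.sum_add_distrib,
          Finset.sum_ite_eq' Finset.univ i' fun _ => b ^ 2,
          Finset.sum_ite_eq' Finset.univ j' fun _ => b ^ 2]
        simp
        ring
  · exact mul_ne_zero h2 (pow_ne_zero 2 hb)
  · intro i j hPij
    have h2b : b + b ≠ b := by
      intro h
      exact hb (by linear_combination h)
    induction i using Fin.cases with
    | zero =>
      induction j using Fin.cases with
      | zero => rfl
      | succ j' =>
        exfalso
        have := congrFun hPij j'
        simp at this
        exact (mul_ne_zero h2 hb) (by linear_combination -this)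
    | succ i' =>
      induction j using Fin.cases with
      | zero =>
        exfalso
        have := congrFun hPij i'
        simp at this
        exact (mul_ne_zero h2 hb) (by linear_combination this)
      | succ j' =>
        have h3 : b + (if (i' : Fin (d+1)) = i' then b else 0)
            = b + (if i' = j' then b else 0) := congrFun hPij i'
        rw [if_pos rfl] at h3
        rcases eq_or_ne i' j' with h | h
        · rw [h]
        · rw [if_neg h] at h3
          exact absurd (by linear_combination h3) hb
end

section
/- Let d ≥ 3 be an integer such that d + 2 is not a power of 2. Then there exist an odd prime p with p dividing d + 2 and a two-distance set X of size C(d+2, 2) = (d+2)(d+1)/2 contained in the d-dimensional subspace W = {x ∈ F_p^{d+1} : x_1 + ⋯ + x_{d+1} = 0} of F_p^{d+1}, with respect to dist²(x,y) = Σ_{i=1}^{d+1} (x_i − y_i)². -/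
private def fvec (d p : ℕ) (a : Fin (d+2)) : Fin (d+1) → ZMod p :=
  if h : (a:ℕ) < d+1 then Pi.single ⟨a, h⟩ 1 else fun _ => -1

private def gvec (d p : ℕ) (a : Fin (d+2)) : Fin (d+1) → ZMod p :=
  fvec d p a - Pi.single ⟨0, Nat.succ_pos d⟩ 1

private lemma sumf (d p : ℕ) (hp : ((d+2 : ℕ) : ZMod p) = 0) (a : Fin (d+2)) :
    ∑ m, fvec d p a m = 1 := by
  unfold fvec
  rcases lt_or_ge (a:ℕ) (d+1) with ha | ha
  · rw [dif_pos ha, Fintype.sum_eq_single (⟨a, ha⟩ : Fin (d+1))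
      (fun x hx => Pi.single_eq_of_ne hx 1), Pi.single_eq_same]
  · rw [dif_neg (by omega)]
    simp only [Finset.sum_const, Finset.card_univ, Fintype.card_fin, nsmul_eq_mul, mul_neg,
      mul_one]
    have h : ((d+1 : ℕ) : ZMod p) + 1 = 0 := by rw [← hp]; push_cast; ring
    linear_combination -h

private lemma sumg (d p : ℕ) (hp : ((d+2 : ℕ) : ZMod p) = 0) (a : Fin (d+2)) :
    ∑ m, gvec d p a m = 0 := by
  unfold gvec
  simp only [Pi.sub_apply, Finset.sum_sub_distrib, sumf d p hp a]
  rw [Fintype.sum_eq_single (⟨0, Nat.succ_pos d⟩ : Fin (d+1))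
    (fun x hx => Pi.single_eq_of_ne hx 1), Pi.single_eq_same, sub_self]
private def lamv (d p : ℕ) (a : Fin (d+2)) : ZMod p :=
  if (a:ℕ) = d+1 then 1 else 0

private lemma ipf (d p : ℕ) (hp : ((d+2 : ℕ) : ZMod p) = 0) (a b : Fin (d+2)) :
    ∑ m, fvec d p a m * fvec d p b m
      = (if a = b then 1 else 0) - lamv d p a - lamv d p b := by
  have hd1 : ((d+1 : ℕ) : ZMod p) = -1 := by
    have h : ((d+1 : ℕ) : ZMod p) + 1 = 0 := by rw [← hp]; push_cast; ring
    linear_combination h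
  unfold fvec lamv
  rcases lt_or_ge (a:ℕ) (d+1) with ha | ha <;> rcases lt_or_ge (b:ℕ) (d+1) with hb | hb
  · rw [dif_pos ha, dif_pos hb, if_neg (show ¬(a:ℕ) = d+1 by omega),
      if_neg (show ¬(b:ℕ) = d+1 by omega), sub_zero, sub_zero]
    rw [Fintype.sum_eq_single (⟨b, hb⟩ : Fin (d+1))
      (fun x hx => by rw [Pi.single_eq_of_ne hx, mul_zero])]
    rw [Pi.single_eq_same, mul_one, Pi.single_apply]
    congr 1
    simp [Fin.ext_iff, eq_comm]
  · have hab : a ≠ b := by intro h; subst h; omega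
    rw [dif_pos ha, dif_neg (by omega), if_neg hab,
      if_neg (show ¬(a:ℕ) = d+1 by omega), if_pos (show (b:ℕ) = d+1 by omega)]
    rw [Fintype.sum_eq_single (⟨a, ha⟩ : Fin (d+1))
      (fun x hx => by rw [Pi.single_eq_of_ne hx, zero_mul])]
    rw [Pi.single_eq_same]; ring
  · have hab : a ≠ b := by intro h; subst h; omega
    rw [dif_neg (by omega), dif_pos hb, if_neg hab,
      if_pos (show (a:ℕ) = d+1 by omega), if_neg (show ¬(b:ℕ) = d+1 by omega)]
    rw [Fintype.sum_eq_single (⟨b, hb⟩ : Fin (d+1))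
      (fun x hx => by rw [Pi.single_eq_of_ne hx, mul_zero])]
    rw [Pi.single_eq_same]; ring
  · have hab : a = b := by apply Fin.ext; omega
    rw [dif_neg (by omega), dif_neg (by omega), if_pos hab,
      if_pos (show (a:ℕ) = d+1 by omega), if_pos (show (b:ℕ) = d+1 by omega)]
    simp only [neg_mul, one_mul, neg_neg, Finset.sum_const, Finset.card_univ,
      Fintype.card_fin, nsmul_eq_mul, mul_one]
    rw [hd1]; ring

private lemma normf (d p : ℕ) (hp : ((d+2 : ℕ) : ZMod p) = 0) (i j k l : Fin (d+2)) :
    ∑ m, (fvec d p i m + fvec d p j m - fvec d p k m - fvec d p l m)^2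
      = 4 + 2*(if i = j then (1:ZMod p) else 0) + 2*(if k = l then 1 else 0)
        - 2*(if i = k then 1 else 0) - 2*(if i = l then 1 else 0)
        - 2*(if j = k then 1 else 0) - 2*(if j = l then 1 else 0) := by
  have expand : ∀ m : Fin (d+1),
      (fvec d p i m + fvec d p j m - fvec d p k m - fvec d p l m)^2
      = fvec d p i m * fvec d p i m + fvec d p j m * fvec d p j m
        + fvec d p k m * fvec d p k m + fvec d p l m * fvec d p l m
        + 2*(fvec d p i m * fvec d p j m) - 2*(fvec d p i m * fvec d p k m)
        - 2*(fvec d p i m * fvec d p l m) - 2*(fvec d p j m * fvec d p k m)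
        - 2*(fvec d p j m * fvec d p l m) + 2*(fvec d p k m * fvec d p l m) := by
    intro m; ring
  rw [Finset.sum_congr rfl (fun m _ => expand m)]
  simp only [Finset.sum_add_distrib, Finset.sum_sub_distrib, ← Finset.mul_sum]
  rw [ipf d p hp i i, ipf d p hp j j, ipf d p hp k k, ipf d p hp l l,
    ipf d p hp i j, ipf d p hp i k, ipf d p hp i l, ipf d p hp j k,
    ipf d p hp j l, ipf d p hp k l]
  simp only [if_pos rfl, if_true]
  ring

private lemma normg (d p : ℕ) (hp : ((d+2 : ℕ) : ZMod p) = 0) (a b c e : Fin (d+2)) :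
    ∑ m, ((gvec d p a m + gvec d p b m) - (gvec d p c m + gvec d p e m))^2
      = 4 + 2*(if a = b then (1:ZMod p) else 0) + 2*(if c = e then 1 else 0)
        - 2*(if a = c then 1 else 0) - 2*(if a = e then 1 else 0)
        - 2*(if b = c then 1 else 0) - 2*(if b = e then 1 else 0) := by
  rw [Finset.sum_congr rfl (fun m _ => show
    ((gvec d p a m + gvec d p b m) - (gvec d p c m + gvec d p e m))^2
      = (fvec d p a m + fvec d p b m - fvec d p c m - fvec d p e m)^2 by
    unfold gvec; simp only [Pi.sub_apply]; ring)]
  exact normf d p hp a b c e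

private lemma norm_val (d p : ℕ) (hp : ((d+2 : ℕ) : ZMod p) = 0) (a b c e : Fin (d+2))
    (hab : a ≠ b) (hce : c ≠ e) (hne : ({a,b} : Finset (Fin (d+2))) ≠ {c,e}) :
    ∑ m, ((gvec d p a m + gvec d p b m) - (gvec d p c m + gvec d p e m))^2 = 2 ∨
    ∑ m, ((gvec d p a m + gvec d p b m) - (gvec d p c m + gvec d p e m))^2 = 4 := by
  rw [normg d p hp a b c e, if_neg hab, if_neg hce]
  by_cases hac : a = c
  · by_cases hbe : b = e
    · exact absurd (by rw [hac, hbe]) hne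
    · have hae : a ≠ e := fun h => hce (hac.symm.trans h)
      have hbc : b ≠ c := fun h => hab (hac.trans h.symm)
      rw [if_pos hac, if_neg hae, if_neg hbc, if_neg hbe]
      left; ring
  · by_cases hae : a = e
    · have hbe : b ≠ e := fun h => hab (hae.trans h.symm)
      by_cases hbc : b = c
      · exact absurd (by rw [hae, hbc, Finset.pair_comm]) hne
      · rw [if_neg hac, if_pos hae, if_neg hbc, if_neg hbe]
        left; ring
    · by_cases hbc : b = c
      · have hbe : b ≠ e := fun h => hce (hbc.symm.trans h)
        rw [if_neg hac, if_neg hae, if_pos hbc, if_neg hbe]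
        left; ring
      · by_cases hbe : b = e
        · rw [if_neg hac, if_neg hae, if_neg hbc, if_pos hbe]
          left; ring
        · rw [if_neg hac, if_neg hae, if_neg hbc, if_neg hbe]
          right; ring

private lemma Fne (d p : ℕ) (hp : ((d+2 : ℕ) : ZMod p) = 0) (h2 : (2 : ZMod p) ≠ 0)
    (h4 : (4 : ZMod p) ≠ 0) (a b c e : Fin (d+2)) (hab : a ≠ b) (hce : c ≠ e)
    (hne : ({a,b} : Finset (Fin (d+2))) ≠ {c,e}) :
    gvec d p a + gvec d p b ≠ gvec d p c + gvec d p e := by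
  intro h
  have hz : ∑ m, ((gvec d p a m + gvec d p b m) - (gvec d p c m + gvec d p e m))^2 = 0 :=
    Finset.sum_eq_zero fun m _ => by
      have hm := congrFun h m
      simp only [Pi.add_apply] at hm
      rw [hm, sub_self]; ring
  rcases norm_val d p hp a b c e hab hce hne with hv | hv <;> rw [hz] at hv
  exacts [h2 hv.symm, h4 hv.symm]

/-- Let `d ≥ 3` be an integer such that `d + 2` is not a power of `2`.
Then there exist an odd prime `p` with `p ∣ d + 2` and a two-distance set `X` of size
`C(d+2, 2) = (d+2)(d+1)/2` contained in the `d`-dimensional subspace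
`W = {x ∈ 𝔽_p^{d+1} : x_1 + ⋯ + x_{d+1} = 0}`, with respect to
`dist²(x, y) = ∑ (x_i - y_i)²`. -/
theorem stmt_16 (d : ℕ) (hd : 3 ≤ d) (hnot : ¬ ∃ k, d + 2 = 2 ^ k) :
    ∃ p : ℕ, p.Prime ∧ Odd p ∧ p ∣ d + 2 ∧
      ∃ X : Finset (Fin (d + 1) → ZMod p),
        (∀ x ∈ X, ∑ i, x i = 0) ∧
        X.card = (d + 2) * (d + 1) / 2 ∧
        {v : ZMod p | ∃ x ∈ X, ∃ y ∈ X, x ≠ y ∧ v = ∑ i, (x i - y i) ^ 2}.ncard = 2 := by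
  classical
  obtain ⟨p, hpp, hodd, hdvd⟩ : ∃ p : ℕ, p.Prime ∧ Odd p ∧ p ∣ (d + 2) := by
    set n := d + 2 with hn
    have hn0 : n ≠ 0 := by omega
    set m := ordCompl[2] n with hm
    have hmdvd : m ∣ n := Nat.ordCompl_dvd n 2
    have hm0 : m ≠ 0 := by intro h; rw [h] at hmdvd; exact hn0 (zero_dvd_iff.mp hmdvd)
    have hm1 : m ≠ 1 := by
      intro h
      apply hnot
      refine ⟨n.factorization 2, ?_⟩
      have h' := Nat.ordProj_mul_ordCompl_eq_self n 2
      rw [← hm, h, mul_one] at h'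
      omega
    have h2m : ¬ 2 ∣ m := Nat.not_dvd_ordCompl Nat.prime_two hn0
    refine ⟨m.minFac, Nat.minFac_prime hm1, ?_, dvd_trans (Nat.minFac_dvd m) hmdvd⟩
    have hdm := Nat.minFac_dvd m
    have hne2 : m.minFac ≠ 2 := by rintro h; rw [h] at hdm; exact h2m hdm
    exact (Nat.minFac_prime hm1).odd_of_ne_two hne2
  haveI : Fact p.Prime := ⟨hpp⟩
  have hp0 : ((d + 2 : ℕ) : ZMod p) = 0 := (ZMod.natCast_eq_zero_iff _ p).mpr hdvd
  have hp3 : 3 ≤ p := by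
    rcases hodd with ⟨k, hk⟩
    have := hpp.two_le
    omega
  have h2 : (2 : ZMod p) ≠ 0 := by
    intro h
    have h' : ((2 : ℕ) : ZMod p) = 0 := by exact_mod_cast h
    have := Nat.le_of_dvd (by norm_num) ((ZMod.natCast_eq_zero_iff 2 p).mp h')
    omega
  have h4 : (4 : ZMod p) ≠ 0 := by
    have h' : (4 : ZMod p) = 2 * 2 := by norm_num
    rw [h']; exact mul_ne_zero h2 h2
  have h24 : (2 : ZMod p) ≠ 4 := by
    intro h; apply h2; linear_combination -h
  refine ⟨p, hpp, hodd, hdvd, ?_⟩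
  set X : Finset (Fin (d + 1) → ZMod p) :=
    (Finset.univ.powersetCard 2).image (fun s => ∑ a ∈ s, gvec d p a) with hX
  have hmem : ∀ x, x ∈ X ↔ ∃ a b : Fin (d+2), a ≠ b ∧ x = gvec d p a + gvec d p b := by
    intro x
    simp only [hX, Finset.mem_image, Finset.mem_powersetCard_univ]
    constructor
    · rintro ⟨s, hs, rfl⟩
      obtain ⟨a, b, hab, rfl⟩ := Finset.card_eq_two.mp hs
      exact ⟨a, b, hab, (Finset.sum_pair hab)⟩
    · rintro ⟨a, b, hab, rfl⟩
      exact ⟨{a, b}, Finset.card_pair hab, Finset.sum_pair hab⟩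
  -- index elements
  have h0 : (0 : ℕ) < d + 2 := by omega
  have h1 : (1 : ℕ) < d + 2 := by omega
  have h2' : (2 : ℕ) < d + 2 := by omega
  have h3' : (3 : ℕ) < d + 2 := by omega
  set i0 : Fin (d+2) := ⟨0, h0⟩
  set i1 : Fin (d+2) := ⟨1, h1⟩
  set i2 : Fin (d+2) := ⟨2, h2'⟩
  set i3 : Fin (d+2) := ⟨3, h3'⟩
  have hi01 : i0 ≠ i1 := by simp [i0, i1, Fin.ext_iff]
  have hi02 : i0 ≠ i2 := by simp [i0, i2, Fin.ext_iff]
  have hi12 : i1 ≠ i2 := by simp [i1, i2, Fin.ext_iff]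
  have hi13 : i1 ≠ i3 := by simp [i1, i3, Fin.ext_iff]
  have hi23 : i2 ≠ i3 := by simp [i2, i3, Fin.ext_iff]
  have hi03 : i0 ≠ i3 := by simp [i0, i3, Fin.ext_iff]
  have hpairA : ({i0, i1} : Finset (Fin (d+2))) ≠ {i0, i2} := by
    intro h
    have h1m : i1 ∈ ({i0, i1} : Finset (Fin (d+2))) := by simp
    rw [h] at h1m
    simp only [Finset.mem_insert, Finset.mem_singleton] at h1m
    rcases h1m with h1m | h1m
    exacts [hi01 h1m.symm, hi12 h1m]
  have hpairB : ({i0, i1} : Finset (Fin (d+2))) ≠ {i2, i3} := by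
    intro h
    have h1m : i0 ∈ ({i0, i1} : Finset (Fin (d+2))) := by simp
    rw [h] at h1m
    simp only [Finset.mem_insert, Finset.mem_singleton] at h1m
    rcases h1m with h1m | h1m
    exacts [hi02 h1m, hi03 h1m]
  refine ⟨X, ?_, ?_, ?_⟩
  · intro x hx
    obtain ⟨a, b, hab, rfl⟩ := (hmem x).mp hx
    simp only [Pi.add_apply, Finset.sum_add_distrib, sumg d p hp0, add_zero]
  · have hinj : Set.InjOn (fun s => ∑ a ∈ s, gvec d p a)
        ((Finset.univ.powersetCard 2 : Finset (Finset (Fin (d+2)))) : Set (Finset (Fin (d+2)))) := by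
      intro s hs t ht hFst
      rw [Finset.mem_coe, Finset.mem_powersetCard_univ] at hs ht
      obtain ⟨a, b, hab, rfl⟩ := Finset.card_eq_two.mp hs
      obtain ⟨c, e, hce, rfl⟩ := Finset.card_eq_two.mp ht
      by_contra hne
      simp only [Finset.sum_pair hab, Finset.sum_pair hce] at hFst
      exact Fne d p hp0 h2 h4 a b c e hab hce hne hFst
    rw [hX, Finset.card_image_of_injOn hinj, Finset.card_powersetCard, Finset.card_univ,
      Fintype.card_fin, Nat.choose_two_right]
    have : d + 2 - 1 = d + 1 := by omega
    rw [this]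
  · have hset : {v : ZMod p | ∃ x ∈ X, ∃ y ∈ X, x ≠ y ∧ v = ∑ i, (x i - y i) ^ 2}
        = {2, 4} := by
      ext v
      simp only [Set.mem_setOf_eq, Set.mem_insert_iff, Set.mem_singleton_iff]
      constructor
      · rintro ⟨x, hx, y, hy, hxy, rfl⟩
        obtain ⟨a, b, hab, rfl⟩ := (hmem x).mp hx
        obtain ⟨c, e, hce, rfl⟩ := (hmem y).mp hy
        have hne : ({a, b} : Finset (Fin (d+2))) ≠ {c, e} := by
          intro h
          apply hxy
          have h' := congrArg (fun s => ∑ a ∈ s, gvec d p a) h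
          simpa only [Finset.sum_pair hab, Finset.sum_pair hce] using h'
        have hv := norm_val d p hp0 a b c e hab hce hne
        simpa only [Pi.add_apply] using hv
      · have hx1 : gvec d p i0 + gvec d p i1 ∈ X := (hmem _).mpr ⟨i0, i1, hi01, rfl⟩
        have hx2 : gvec d p i0 + gvec d p i2 ∈ X := (hmem _).mpr ⟨i0, i2, hi02, rfl⟩
        have hx3 : gvec d p i2 + gvec d p i3 ∈ X := (hmem _).mpr ⟨i2, i3, hi23, rfl⟩
        rintro (rfl | rfl)
        · refine ⟨_, hx1, _, hx2, Fne d p hp0 h2 h4 i0 i1 i0 i2 hi01 hi02 hpairA, ?_⟩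
          have hv : ∑ m, ((gvec d p i0 m + gvec d p i1 m) - (gvec d p i0 m + gvec d p i2 m))^2
              = 2 := by
            rw [normg d p hp0 i0 i1 i0 i2, if_neg hi01, if_neg hi02, if_pos rfl,
              if_neg (Ne.symm hi01), if_neg hi12]
            ring
          simpa only [Pi.add_apply] using hv.symm
        · refine ⟨_, hx1, _, hx3, Fne d p hp0 h2 h4 i0 i1 i2 i3 hi01 hi23 hpairB, ?_⟩
          have hv : ∑ m, ((gvec d p i0 m + gvec d p i1 m) - (gvec d p i2 m + gvec d p i3 m))^2
              = 4 := by
            rw [normg d p hp0 i0 i1 i2 i3, if_neg hi01, if_neg hi23, if_neg hi02,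
              if_neg hi03, if_neg hi12, if_neg hi13]
            ring
          simpa only [Pi.add_apply] using hv.symm
    rw [hset]
    exact Set.ncard_pair h24
end
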